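/- arXiv:2509.18223 — 3 statements merged into one kernel-verified Lean document; each statement's English description precedes it below -/
import Mathlib

section
/- Let G be a finite simple graph on vertex set V. Then there exists a press vector x : V → ZMod 2 such that for every vertex u, x u + ∑_{w ∈ N(u)} x w = 1; that is, some sequence of moves toggles every vertex exactly once (the all-ones effect is always achievable). -/
open Finset Matrix

theorem lights_out_all_ones {V : Type*} [Fintype V] (G : SimpleGraph V)
    [DecidableRel G.Adj] :
    ∃ x : V → ZMod 2, ∀ u : V,
      x u + ∑ w ∈ G.neighborFinset u, x w = 1 := by
  classical
  set A : Matrix V V (ZMod 2) := fun u w =>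
    (if u = w then 1 else 0) + (if G.Adj u w then 1 else 0) with hA
  have hAsymm : ∀ u w, A u w = A w u := by
    intro u w
    simp only [hA]
    rw [if_congr (eq_comm) rfl rfl, if_congr (G.adj_comm u w) rfl rfl]
  have hAdiag : ∀ u, A u u = 1 := by
    intro u
    simp [hA, G.irrefl]
  have hsq : ∀ a : ZMod 2, a * a = a := by decide
  -- key: (1 : V → ZMod 2) ∈ range of mulVecLin A
  have hmem : (1 : V → ZMod 2) ∈ LinearMap.range A.mulVecLin := by
    rw [← Subspace.forall_mem_dualAnnihilator_apply_eq_zero_iff (LinearMap.range A.mulVecLin) 1]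
    intro φ hφ
    rw [Submodule.mem_dualAnnihilator] at hφ
    set y : V → ZMod 2 := fun u => φ (Pi.single u 1) with hy
    have hφeq : ∀ z : V → ZMod 2, φ z = ∑ u, z u * y u := by
      intro z
      have hz : φ z = ∑ u, φ (Pi.single u (z u)) := by
        conv_lhs => rw [show z = ∑ u, Pi.single u (z u) from (Finset.univ_sum_single z).symm]
        exact map_sum φ _ _
      rw [hz]
      refine Finset.sum_congr rfl fun u _ => ?_
      have h1 : Pi.single u (z u) = z u • (Pi.single u (1 : ZMod 2) : V → ZMod 2) := by
        ext v
        simp only [Pi.single_apply, Pi.smul_apply, smul_eq_mul]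
        split <;> simp
      rw [h1, _root_.map_smul, smul_eq_mul, hy]
    -- φ vanishes on the range of mulVec
    have hker : ∀ x : V → ZMod 2, φ (A.mulVec x) = 0 := by
      intro x
      exact hφ _ ⟨x, rfl⟩
    -- columns of A are orthogonal to y
    have hcol : ∀ w : V, ∑ u, A u w * y u = 0 := by
      intro w
      have := hker (Pi.single w 1)
      rw [hφeq] at this
      simpa [Matrix.mulVec_single] using this
    -- rows too, by symmetry
    have hrow : ∀ u : V, ∑ w, A u w * y w = 0 := by
      intro u
      rw [← hcol u]
      exact Finset.sum_congr rfl fun w _ => by rw [hAsymm u w]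
    -- the quadratic form of y vanishes
    have hS : ∑ p ∈ (univ : Finset V) ×ˢ univ, y p.1 * (A p.1 p.2 * y p.2) = 0 := by
      rw [Finset.sum_product]
      calc ∑ u, ∑ w, y u * (A u w * y w)
          = ∑ u, y u * ∑ w, A u w * y w := by
            refine Finset.sum_congr rfl fun u _ => ?_
            rw [Finset.mul_sum]
        _ = 0 := by simp [hrow]
    -- split into diagonal and off-diagonal
    have hsplit : ∑ p ∈ (univ : Finset V) ×ˢ univ, y p.1 * (A p.1 p.2 * y p.2)
        = (∑ p ∈ (univ : Finset V).diag, y p.1 * (A p.1 p.2 * y p.2))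
          + ∑ p ∈ (univ : Finset V).offDiag, y p.1 * (A p.1 p.2 * y p.2) := by
      rw [← Finset.diag_union_offDiag, Finset.sum_union (Finset.disjoint_diag_offDiag _)]
    have hdiag : ∑ p ∈ (univ : Finset V).diag, y p.1 * (A p.1 p.2 * y p.2) = ∑ u, y u := by
      rw [Finset.sum_diag]
      refine Finset.sum_congr rfl fun u _ => ?_
      rw [hAdiag u, one_mul, hsq]
    have hoff : ∑ p ∈ (univ : Finset V).offDiag, y p.1 * (A p.1 p.2 * y p.2) = 0 := by
      refine Finset.sum_involution (fun p _ => p.swap) ?_ ?_ ?_ ?_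
      · intro p _
        have : y p.swap.1 * (A p.swap.1 p.swap.2 * y p.swap.2)
            = y p.1 * (A p.1 p.2 * y p.2) := by
          simp only [Prod.fst_swap, Prod.snd_swap]
          rw [hAsymm p.2 p.1]
          ring
        rw [this]
        exact CharTwo.add_self_eq_zero _
      · intro p hp _
        have hne := (Finset.mem_offDiag.mp hp).2.2
        intro hcontra
        exact hne (by simpa [Prod.ext_iff, eq_comm] using hcontra)
      · intro p hp
        rw [Finset.mem_offDiag] at hp ⊢
        exact ⟨hp.2.1, hp.1, fun h => hp.2.2 h.symm⟩
      · intro p _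
        exact Prod.swap_swap p
    have hsum : ∑ u, y u = 0 := by
      have := hS
      rw [hsplit, hdiag, hoff, add_zero] at this
      exact this
    rw [hφeq]
    simpa using hsum
  obtain ⟨x, hx⟩ := hmem
  refine ⟨x, fun u => ?_⟩
  have hxu : A.mulVec x u = 1 := by
    rw [show A.mulVec x = A.mulVecLin x from rfl, hx]; rfl
  rw [Matrix.mulVec, dotProduct] at hxu
  simp only [hA, add_mul] at hxu
  rw [Finset.sum_add_distrib] at hxu
  have h1 : ∑ w, (if u = w then (1 : ZMod 2) else 0) * x w = x u := by
    simp [ite_mul]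
  have h2 : ∑ w, (if G.Adj u w then (1 : ZMod 2) else 0) * x w
      = ∑ w ∈ G.neighborFinset u, x w := by
    rw [G.neighborFinset_eq_filter, Finset.sum_filter]
    simp [ite_mul]
  rw [h1, h2] at hxu
  exact hxu
end

section
/- Let G be a finite simple graph on vertex set V, let A be its adjacency matrix over the field ZMod 2, and let I be the identity matrix. Then the all-ones vector lies in the range of the linear map x ↦ (A + I) x; i.e., there exists x : V → ZMod 2 with (A + I).mulVec x = fun _ => 1. -/
lemma zmod2_sq (x : ZMod 2) : x * x = x := by revert x; decide

lemma quad_form_zero {V : Type*} [Fintype V] [DecidableEq V] (G : SimpleGraph V)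
    [DecidableRel G.Adj] (y : V → ZMod 2) :
    ∑ i, y i * (G.adjMatrix (ZMod 2)).mulVec y i = 0 := by
  simp only [Matrix.mulVec, dotProduct, Finset.mul_sum]
  rw [← Finset.sum_product']
  apply Finset.sum_involution (fun p _ => (p.2, p.1))
  · intro a _
    have hsym : G.adjMatrix (ZMod 2) a.2 a.1 = G.adjMatrix (ZMod 2) a.1 a.2 := by
      simp [SimpleGraph.adjMatrix_apply, SimpleGraph.adj_comm]
    rw [hsym]
    ring_nf
    simp [show (2 : ZMod 2) = 0 by decide]
  · intro a _ hne h
    apply hne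
    have h2 : a.2 = a.1 := congrArg Prod.fst h
    simp [h2, SimpleGraph.adjMatrix_apply]
  · intro a _; simp
  · intro a _; rfl

theorem lights_out_matrix {V : Type*} [Fintype V] [DecidableEq V] (G : SimpleGraph V)
    [DecidableRel G.Adj] :
    ∃ x : V → ZMod 2,
      (G.adjMatrix (ZMod 2) + 1).mulVec x = fun _ => 1 := by
  set A := G.adjMatrix (ZMod 2) with hA
  by_contra h
  push_neg at h
  have hmem : (fun _ => (1 : ZMod 2)) ∉ LinearMap.range (A + 1).mulVecLin := by
    rintro ⟨x, hx⟩
    exact h x hx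
  obtain ⟨φ, hφ1, hφ0⟩ := Submodule.exists_dual_map_eq_bot_of_notMem hmem inferInstance
  have hker : ∀ v ∈ LinearMap.range (A + 1).mulVecLin, φ v = 0 := by
    intro v hv
    have : φ v ∈ Submodule.map φ (LinearMap.range (A + 1).mulVecLin) :=
      Submodule.mem_map_of_mem hv
    rw [hφ0] at this
    simpa using this
  set y : V → ZMod 2 := fun i => φ (Pi.single i 1) with hy
  have hrep : ∀ f : V → ZMod 2, φ f = ∑ i, f i * y i := by
    intro f
    have : f = ∑ i, f i • Pi.single i (1 : ZMod 2) := by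
      funext j
      simp [Pi.single_apply]
    conv_lhs => rw [this]
    rw [map_sum]
    apply Finset.sum_congr rfl
    intro i _
    rw [map_smul]
    simp [hy, mul_comm]
  -- y is in the kernel of (A+1)ᵀ = A+1
  have hcol : ∀ j, ∑ i, (A + 1) i j * y i = 0 := by
    intro j
    have := hker ((A + 1).mulVec (Pi.single j 1)) ⟨Pi.single j 1, rfl⟩
    rw [hrep] at this
    simpa [Matrix.mulVec_single] using this
  have hkerM : (A + 1).mulVec y = 0 := by
    funext i
    simp only [Matrix.mulVec, dotProduct, Pi.zero_apply]
    rw [← hcol i]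
    apply Finset.sum_congr rfl
    intro k _
    congr 1
    simp [hA, Matrix.one_apply, SimpleGraph.adjMatrix_apply, SimpleGraph.adj_comm,
      eq_comm (a := i) (b := k)]
  have hAy : A.mulVec y = y := by
    have := hkerM
    rw [Matrix.add_mulVec, Matrix.one_mulVec] at this
    have h2 : A.mulVec y + y + y = y := by rw [this]; simp
    rwa [add_assoc, show y + y = 0 by funext i; simp [show ∀ a : ZMod 2, a + a = 0 by decide],
      add_zero] at h2
  have hsum : ∑ i, y i = 0 := by
    have := quad_form_zero G y
    rw [hAy] at this
    simpa [zmod2_sq] using this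
  apply hφ1
  rw [hrep]
  simpa using hsum
end

section
/- Let G be a finite simple graph on vertex set V and let v be any vertex. Then there exists a press vector x : V → ZMod 2 with x v = 0 such that for every vertex u ≠ v, the effect x u + ∑_{w ∈ N(u)} x w equals 1; that is, using presses only at vertices other than v, one can toggle every vertex different from v an odd number of times. -/
/-!
Over `ZMod 2`, the quadratic form of a symmetric matrix `M` is linear: `y ⬝ᵥ M *ᵥ y` equals
`M.diag ⬝ᵥ y`, because the off-diagonal terms cancel in pairs. Hence `M.diag` is orthogonal to
`ker M`, and since the range of a symmetric matrix is the orthogonal complement of its kernel,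
`M *ᵥ x = M.diag` is solvable (Sutner). Applied to `D (1 + A) D`, where `A` is the adjacency
matrix and `D` is the diagonal projection away from `v`, this gives the required press vector.
-/

open Matrix Finset

theorem CharTwo.sum_sum_eq_sum_diag_of_symm {R ι : Type*} [CommRing R] [CharP R 2]
    (s : Finset ι) (f : ι → ι → R) (hf : ∀ i j, f i j = f j i) :
    ∑ i ∈ s, ∑ j ∈ s, f i j = ∑ i ∈ s, f i i := by
  induction s using Finset.cons_induction with
  | empty => simp
  | cons a s ha ih =>
    have hcol : ∑ i ∈ s, f i a = ∑ j ∈ s, f a j := sum_congr rfl fun i _ => hf i a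
    simp only [sum_cons, sum_add_distrib, ih, hcol]
    linear_combination (∑ j ∈ s, f a j) * CharTwo.two_eq_zero (R := R)

theorem Matrix.IsSymm.dotProduct_mulVec_self_of_charTwo {R n : Type*} [CommRing R] [CharP R 2]
    [Fintype n] {M : Matrix n n R} (hM : M.IsSymm) (y : n → R) :
    y ⬝ᵥ (M *ᵥ y) = ∑ i, M i i * y i ^ 2 := by
  simp only [dotProduct, mulVec, mul_sum]
  rw [CharTwo.sum_sum_eq_sum_diag_of_symm _ _ fun i j => by rw [hM.apply i j]; ring]
  exact sum_congr rfl fun i _ => by ring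

theorem Matrix.exists_vecMul_eq_of_forall_mulVec_eq_zero {K m n : Type*} [Field K] [Fintype m]
    [Fintype n] (M : Matrix m n K) (b : n → K) (hb : ∀ y, M *ᵥ y = 0 → b ⬝ᵥ y = 0) :
    ∃ c, c ᵥ* M = b := by
  classical
  have hb' : dotProductEquiv K n b ∈ (LinearMap.ker M.mulVecLin).dualAnnihilator :=
    (Submodule.mem_dualAnnihilator _).mpr fun y hy => hb y hy
  rw [← LinearMap.range_dualMap_eq_dualAnnihilator_ker] at hb'
  obtain ⟨φ, hφ⟩ := hb'
  refine ⟨(dotProductEquiv K m).symm φ, dotProduct_eq _ _ fun y => ?_⟩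
  calc (dotProductEquiv K m).symm φ ᵥ* M ⬝ᵥ y
      = dotProductEquiv K m ((dotProductEquiv K m).symm φ) (M *ᵥ y) :=
        (dotProduct_mulVec _ _ _).symm
    _ = b ⬝ᵥ y := by rw [LinearEquiv.apply_symm_apply]; exact LinearMap.congr_fun hφ y

theorem Matrix.IsSymm.exists_mulVec_eq_diag {n : Type*} [Fintype n] {M : Matrix n n (ZMod 2)}
    (hM : M.IsSymm) : ∃ x, M *ᵥ x = M.diag := by
  obtain ⟨c, hc⟩ := M.exists_vecMul_eq_of_forall_mulVec_eq_zero M.diag fun y hy => by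
    simpa [hy, dotProduct, ZMod.pow_card] using (hM.dotProduct_mulVec_self_of_charTwo y).symm
  exact ⟨c, by rw [← hc, ← mulVec_transpose, hM.eq]⟩

theorem Matrix.IsSymm.exists_mulVec_eq_one_on {n : Type*} [Fintype n]
    {N : Matrix n n (ZMod 2)} (hN : N.IsSymm) (hdiag : ∀ i, N i i = 1) (S : Set n) :
    ∃ y, (∀ i ∉ S, y i = 0) ∧ ∀ i ∈ S, (N *ᵥ y) i = 1 := by
  classical
  set d : n → ZMod 2 := S.indicator 1
  have hsymm : (diagonal d * N * diagonal d).IsSymm := by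
    simp [IsSymm, transpose_mul, hN.eq, Matrix.mul_assoc]
  obtain ⟨x, hx⟩ := hsymm.exists_mulVec_eq_diag
  refine ⟨diagonal d *ᵥ x, fun i hi => ?_, fun i hi => ?_⟩
  · simp [mulVec_diagonal, d, Set.indicator_of_notMem hi]
  · have hxi := congrFun hx i
    rw [← mulVec_mulVec, ← mulVec_mulVec, mulVec_diagonal] at hxi
    simpa [d, hi, hdiag] using hxi

theorem lights_out_avoid_vertex {V : Type*} [Fintype V] (G : SimpleGraph V)
    [DecidableRel G.Adj] (v : V) :
    ∃ x : V → ZMod 2, x v = 0 ∧ ∀ u : V, u ≠ v →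
      x u + ∑ w ∈ G.neighborFinset u, x w = 1 := by
  classical
  have hN : (1 + G.adjMatrix (ZMod 2)).IsSymm := isSymm_one.add G.isSymm_adjMatrix
  obtain ⟨x, hx₀, hx₁⟩ := hN.exists_mulVec_eq_one_on (fun i => by simp) {v}ᶜ
  refine ⟨x, hx₀ v (by simp), fun u hu => ?_⟩
  simpa [add_mulVec, G.adjMatrix_mulVec_apply] using hx₁ u hu
end
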